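/- arXiv:2003.01522 — 3 statements merged into one kernel-verified Lean document; each statement's English description precedes it below -/
import Mathlib

section
/- For fixed λ > 0 and s ≥ 0, define φ₂(s) = λ² / ((s+λ)³ + 2μs² + 2μλs + μ²s) (depending on the parameter μ > 0). Then the limit of φ₂((λ/μ)²·s) as μ → ∞ equals 1/(λ + s). -/
/-!
In terms of `t = 1/μ`, the rescaled denominator of `φ₂` is a polynomial in `t` whose value at
`t = 0` is `λ² (λ + s)`: the only term that survives is `μ² · (λ/μ)² s = λ² s` together with `λ³`.
The limit is therefore the value at `t = 0` of a function continuous there.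
-/

open Filter Topology

noncomputable def phi2 (lam mu s : ℝ) : ℝ :=
  lam ^ 2 / ((s + lam) ^ 3 + 2 * mu * s ^ 2 + 2 * mu * lam * s + mu ^ 2 * s)

def rescaledDenom (lam s t : ℝ) : ℝ :=
  (lam ^ 2 * s * t ^ 2 + lam) ^ 3 + 2 * lam ^ 4 * s ^ 2 * t ^ 3 + 2 * lam ^ 3 * s * t +
    lam ^ 2 * s

section

variable (lam s : ℝ)

theorem phi2_rescaled_eq {mu : ℝ} (hmu : mu ≠ 0) :
    phi2 lam mu ((lam / mu) ^ 2 * s) = lam ^ 2 / rescaledDenom lam s mu⁻¹ := by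
  unfold phi2 rescaledDenom
  congr 1
  field_simp

theorem continuous_rescaledDenom : Continuous (rescaledDenom lam s) := by
  unfold rescaledDenom
  fun_prop

theorem rescaledDenom_zero : rescaledDenom lam s 0 = lam ^ 2 * (lam + s) := by
  simp only [rescaledDenom]
  ring

variable {lam s}

theorem tendsto_phi2_rescaled (hlam : lam ≠ 0) (hs : lam + s ≠ 0) :
    Tendsto (fun mu => phi2 lam mu ((lam / mu) ^ 2 * s)) atTop (𝓝 (1 / (lam + s))) := by
  have hlimit : lam ^ 2 / rescaledDenom lam s 0 = 1 / (lam + s) := by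
    rw [rescaledDenom_zero]
    field_simp
  have hcont : Tendsto (fun t => lam ^ 2 / rescaledDenom lam s t) (𝓝 0) (𝓝 (1 / (lam + s))) := by
    rw [← hlimit]
    refine tendsto_const_nhds.div ((continuous_rescaledDenom lam s).tendsto 0) ?_
    rw [rescaledDenom_zero]
    positivity
  refine (hcont.comp tendsto_inv_atTop_zero).congr' ?_
  filter_upwards [eventually_ne_atTop 0] with mu hmu
  exact (phi2_rescaled_eq lam s hmu).symm

end

theorem stmt_3 (lam s : ℝ) (hlam : 0 < lam) (hs : 0 ≤ s) :
    Tendsto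
      (fun mu : ℝ =>
        lam ^ 2 /
          ((((lam / mu) ^ 2 * s) + lam) ^ 3 + 2 * mu * ((lam / mu) ^ 2 * s) ^ 2 +
            2 * mu * lam * ((lam / mu) ^ 2 * s) + mu ^ 2 * ((lam / mu) ^ 2 * s)))
      atTop (𝓝 (1 / (lam + s))) :=
  tendsto_phi2_rescaled hlam.ne' (by positivity)
end

section
/- Fix a natural number n > 3, λ > 0 and s ≥ 0. For μ > λ let q₁(s) = ((λ+μ+s) + √((λ+μ+s)² − 4λμ))/(2μ), q₂(s) = ((λ+μ+s) − √((λ+μ+s)² − 4λμ))/(2μ), and define V_μ(s) = q₂(s)^{n−2}(λ − q₂(s)(λ+μ+s))(μq₁(s) − (λ+s)) + q₁(s)^{n−2}(μq₂(s) − (λ+s))(q₁(s)(λ+μ+s) − λ). Then the limit as μ → ∞ of V_μ((λ/μ)^{n−1}·s) / (−(λ/μ)^{n−2}·(λ² + λs)) equals 1. -/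
/-!
By Vieta, `q₁ + q₂ = (λ + μ + t)/μ` and `q₁ q₂ = λ/μ`; these collapse `V_μ(t)` to
`μ² (q₁ⁿ (1 - q₁) - q₂ⁿ (1 - q₂))`. Since moreover `μ (1 - q₁)(1 - q₂) = -t` and
`q₂ = (λ/μ)/q₁`, at `t = (λ/μ)^(n-1) s` this is exactly
`-(λ/μ)^(n-2) (λ s q₁ⁿ/(1 - q₂) + λ² (1 - q₂)/q₁ⁿ)`. As `μ → ∞` the roots of
`q² - ((λ + μ + t)/μ) q + λ/μ` tend to those of `q² - q`, i.e. `q₁ → 1`, `q₂ → 0`,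
so the normalized ratio tends to `(λ s + λ²)/(λ² + λ s) = 1`.
-/

open Filter Topology

noncomputable def rootPlus (b c : ℝ) : ℝ := (b + √(b ^ 2 - 4 * c)) / 2

noncomputable def rootMinus (b c : ℝ) : ℝ := (b - √(b ^ 2 - 4 * c)) / 2

theorem rootPlus_add_rootMinus (b c : ℝ) : rootPlus b c + rootMinus b c = b := by
  unfold rootPlus rootMinus
  ring

theorem rootPlus_mul_rootMinus {b c : ℝ} (h : 4 * c ≤ b ^ 2) :
    rootPlus b c * rootMinus b c = c := by
  unfold rootPlus rootMinus
  linear_combination (-1 / 4 : ℝ) * Real.sq_sqrt (sub_nonneg.2 h)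

theorem tendsto_rootPlus_one_zero :
    Tendsto (fun p : ℝ × ℝ => rootPlus p.1 p.2) (𝓝 (1, 0)) (𝓝 1) := by
  have h : Continuous (fun p : ℝ × ℝ => rootPlus p.1 p.2) := by
    unfold rootPlus
    fun_prop
  simpa [rootPlus] using h.tendsto (1, 0)

theorem tendsto_rootMinus_one_zero :
    Tendsto (fun p : ℝ × ℝ => rootMinus p.1 p.2) (𝓝 (1, 0)) (𝓝 0) := by
  have h : Continuous (fun p : ℝ × ℝ => rootMinus p.1 p.2) := by
    unfold rootMinus
    fun_prop
  simpa [rootMinus] using h.tendsto (1, 0)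

theorem sqrt_discrim_eq_mul {mu : ℝ} (hmu : 0 < mu) (a l : ℝ) :
    √(a ^ 2 - 4 * l * mu) = mu * √((a / mu) ^ 2 - 4 * (l / mu)) := by
  have h : a ^ 2 - 4 * l * mu = mu ^ 2 * ((a / mu) ^ 2 - 4 * (l / mu)) := by
    field_simp
  rw [h, Real.sqrt_mul (sq_nonneg mu), Real.sqrt_sq hmu.le]

theorem add_sqrt_discrim_div_eq_rootPlus {mu : ℝ} (hmu : 0 < mu) (a l : ℝ) :
    (a + √(a ^ 2 - 4 * l * mu)) / (2 * mu) = rootPlus (a / mu) (l / mu) := by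
  rw [sqrt_discrim_eq_mul hmu, rootPlus]
  field_simp

theorem sub_sqrt_discrim_div_eq_rootMinus {mu : ℝ} (hmu : 0 < mu) (a l : ℝ) :
    (a - √(a ^ 2 - 4 * l * mu)) / (2 * mu) = rootMinus (a / mu) (l / mu) := by
  rw [sqrt_discrim_eq_mul hmu, rootMinus]
  field_simp

/-- `V_μ(t)`, with the roots `q₁(t)`, `q₂(t)` passed as `x`, `y`. -/
def denomV (n : ℕ) (lam mu t x y : ℝ) : ℝ :=
  y ^ (n - 2) * (lam - y * (lam + mu + t)) * (mu * x - (lam + t)) +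
    x ^ (n - 2) * (mu * y - (lam + t)) * (x * (lam + mu + t) - lam)

section Vieta

variable {lam mu t x y : ℝ}

theorem denomV_eq_of_vieta (hsum : mu * (x + y) = lam + mu + t) (hprod : mu * (x * y) = lam)
    (m : ℕ) :
    denomV (m + 2) lam mu t x y =
      mu ^ 2 * (x ^ (m + 2) * (1 - x) - y ^ (m + 2) * (1 - y)) := by
  have ht : lam + t = mu * (x + y) - mu := by linarith
  rw [denomV, Nat.add_sub_cancel, ← hsum, ht, ← hprod]
  ring

theorem mul_one_sub_mul_one_sub_of_vieta (hsum : mu * (x + y) = lam + mu + t)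
    (hprod : mu * (x * y) = lam) : mu * (1 - x) * (1 - y) = -t := by
  linear_combination hprod - hsum

theorem denomV_eq_of_vieta_of_eq_pow {s : ℝ} {m : ℕ} (hmu : mu ≠ 0)
    (hsum : x + y = (lam + mu + t) / mu) (hprod : x * y = lam / mu)
    (ht : t = (lam / mu) ^ (m + 1) * s) (hx : x ≠ 0) (hy : y ≠ 1) :
    denomV (m + 2) lam mu t x y =
      -(lam / mu) ^ m * (lam * s * x ^ (m + 2) / (1 - y) + lam ^ 2 * (1 - y) / x ^ (m + 2)) := by
  have hsum' : mu * (x + y) = lam + mu + t := by rw [hsum]; field_simp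
  have hprod' : mu * (x * y) = lam := by rw [hprod]; field_simp
  have hy' : 1 - y ≠ 0 := sub_ne_zero.2 hy.symm
  have hmu_t : mu * t = lam * (lam / mu) ^ m * s := by
    rw [ht, pow_succ]; field_simp
  have hx_term : mu ^ 2 * (x ^ (m + 2) * (1 - x)) =
      -(lam / mu) ^ m * (lam * s * x ^ (m + 2) / (1 - y)) := by
    have hroot : mu * (1 - x) = -t / (1 - y) := by
      rw [eq_div_iff hy', mul_one_sub_mul_one_sub_of_vieta hsum' hprod']
    calc mu ^ 2 * (x ^ (m + 2) * (1 - x)) = x ^ (m + 2) * mu * (mu * (1 - x)) := by ring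
      _ = -(lam / mu) ^ m * (lam * s * x ^ (m + 2) / (1 - y)) := by
        rw [hroot, mul_div_assoc', mul_neg, mul_assoc, hmu_t]; ring
  have hy_term : mu ^ 2 * (y ^ (m + 2) * (1 - y)) =
      (lam / mu) ^ m * (lam ^ 2 * (1 - y) / x ^ (m + 2)) := by
    have hyx : y = lam / mu / x := by rw [← hprod]; field_simp
    rw [hyx, div_pow, pow_add _ m 2]
    field_simp
  rw [denomV_eq_of_vieta hsum' hprod', mul_sub, hx_term, hy_term]
  ring

end Vieta

theorem tendsto_lifetime_ratio {lam s : ℝ} (hden : lam ^ 2 + lam * s ≠ 0) (m : ℕ)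
    {l : Filter ℝ} {x y : ℝ → ℝ} (hx : Tendsto x l (𝓝 1)) (hy : Tendsto y l (𝓝 0)) :
    Tendsto (fun mu => (lam * s * x mu ^ (m + 2) / (1 - y mu) +
      lam ^ 2 * (1 - y mu) / x mu ^ (m + 2)) / (lam ^ 2 + lam * s)) l (𝓝 1) := by
  have hx' := hx.pow (m + 2)
  have hy' := tendsto_const_nhds (x := (1 : ℝ)).sub hy
  have h := ((((tendsto_const_nhds (x := lam * s)).mul hx').div hy' (by norm_num)).add
    (((tendsto_const_nhds (x := lam ^ 2)).mul hy').div hx' (by norm_num))).div_const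
    (lam ^ 2 + lam * s)
  have hlim : (lam * s * 1 ^ (m + 2) / (1 - 0) + lam ^ 2 * (1 - 0) / 1 ^ (m + 2)) /
      (lam ^ 2 + lam * s) = 1 := by
    rw [div_eq_one_iff_eq hden]; ring
  rwa [hlim] at h

theorem tendsto_add_add_div_atTop (lam : ℝ) {t : ℝ → ℝ} (ht : Tendsto t atTop (𝓝 0)) :
    Tendsto (fun mu => (lam + mu + t mu) / mu) atTop (𝓝 1) := by
  have h : Tendsto (fun mu => 1 + (lam + t mu) / mu) atTop (𝓝 (1 + 0)) :=
    tendsto_const_nhds.add ((tendsto_const_nhds.add ht).div_atTop tendsto_id)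
  rw [add_zero] at h
  refine h.congr' ?_
  filter_upwards [eventually_ne_atTop 0] with mu hmu
  field_simp
  ring

theorem eventually_four_mul_le_sq {α : Type*} {l : Filter α} {b c : α → ℝ}
    (hb : Tendsto b l (𝓝 1)) (hc : Tendsto c l (𝓝 0)) :
    ∀ᶠ a in l, 4 * c a ≤ b a ^ 2 := by
  have h : Tendsto (fun a => b a ^ 2 - 4 * c a) l (𝓝 1) := by
    simpa using (hb.pow 2).sub (hc.const_mul 4)
  filter_upwards [h.eventually_const_lt zero_lt_one] with a ha
  linarith

theorem stmt_12 (n : ℕ) (hn : 3 < n) (lam s : ℝ) (hlam : 0 < lam) (hs : 0 ≤ s) :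
    Tendsto
      (fun mu : ℝ =>
        (fun t : ℝ =>
            (((lam + mu + t) - Real.sqrt ((lam + mu + t) ^ 2 - 4 * lam * mu)) /
                  (2 * mu)) ^ (n - 2) *
                (lam -
                  (((lam + mu + t) - Real.sqrt ((lam + mu + t) ^ 2 - 4 * lam * mu)) /
                      (2 * mu)) * (lam + mu + t)) *
                (mu *
                    (((lam + mu + t) + Real.sqrt ((lam + mu + t) ^ 2 - 4 * lam * mu)) /
                      (2 * mu)) - (lam + t)) +
              (((lam + mu + t) + Real.sqrt ((lam + mu + t) ^ 2 - 4 * lam * mu)) /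
                  (2 * mu)) ^ (n - 2) *
                (mu *
                    (((lam + mu + t) - Real.sqrt ((lam + mu + t) ^ 2 - 4 * lam * mu)) /
                      (2 * mu)) - (lam + t)) *
                ((((lam + mu + t) + Real.sqrt ((lam + mu + t) ^ 2 - 4 * lam * mu)) /
                      (2 * mu)) * (lam + mu + t) - lam))
          ((lam / mu) ^ (n - 1) * s) /
        (-(lam / mu) ^ (n - 2) * (lam ^ 2 + lam * s)))
      atTop (𝓝 1) := by
  obtain ⟨m, rfl⟩ := Nat.exists_eq_add_of_le' (by omega : 2 ≤ n)
  let t : ℝ → ℝ := fun mu => (lam / mu) ^ (m + 1) * s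
  let b : ℝ → ℝ := fun mu => (lam + mu + t mu) / mu
  show Tendsto (fun mu => denomV (m + 2) lam mu (t mu)
      ((lam + mu + t mu + √((lam + mu + t mu) ^ 2 - 4 * lam * mu)) / (2 * mu))
      ((lam + mu + t mu - √((lam + mu + t mu) ^ 2 - 4 * lam * mu)) / (2 * mu)) /
    (-(lam / mu) ^ m * (lam ^ 2 + lam * s))) atTop (𝓝 1)
  have hc : Tendsto (fun mu => lam / mu) atTop (𝓝 0) :=
    tendsto_const_nhds.div_atTop (g := fun mu => mu) tendsto_id
  have hb : Tendsto b atTop (𝓝 1) :=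
    tendsto_add_add_div_atTop lam (by simpa using (hc.pow (m + 1)).mul_const s)
  have hq₁ : Tendsto (fun mu => rootPlus (b mu) (lam / mu)) atTop (𝓝 1) :=
    tendsto_rootPlus_one_zero.comp (hb.prodMk_nhds hc)
  have hq₂ : Tendsto (fun mu => rootMinus (b mu) (lam / mu)) atTop (𝓝 0) :=
    tendsto_rootMinus_one_zero.comp (hb.prodMk_nhds hc)
  have hden : lam ^ 2 + lam * s ≠ 0 := by positivity
  refine (tendsto_lifetime_ratio hden m hq₁ hq₂).congr' ?_
  filter_upwards [eventually_gt_atTop 0, eventually_four_mul_le_sq hb hc,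
    hq₁.eventually_ne one_ne_zero, hq₂.eventually_ne zero_ne_one] with mu hmu hdisc hx hy
  rw [add_sqrt_discrim_div_eq_rootPlus hmu, sub_sqrt_discrim_div_eq_rootMinus hmu,
    denomV_eq_of_vieta_of_eq_pow hmu.ne' (rootPlus_add_rootMinus _ _)
      (rootPlus_mul_rootMinus hdisc) rfl hx hy, neg_mul, neg_mul, neg_div_neg_eq,
    mul_div_mul_left _ _ (pow_ne_zero _ (div_pos hlam hmu).ne')]
end

section
/- Fix a natural number n > 3, λ > 0 and s ≥ 0. For μ > λ let q₁(s) = ((λ+μ+s) + √((λ+μ+s)² − 4λμ))/(2μ), q₂(s) = ((λ+μ+s) − √((λ+μ+s)² − 4λμ))/(2μ), R_μ(s) = −λ·(λ/μ)^{n−2}·√((λ+μ+s)² − 4λμ)/μ, and V_μ(s) = q₂(s)^{n−2}(λ − q₂(s)(λ+μ+s))(μq₁(s) − (λ+s)) + q₁(s)^{n−2}(μq₂(s) − (λ+s))(q₁(s)(λ+μ+s) − λ), and set φ_{n−1,μ}(s) = R_μ(s)/V_μ(s). Then the limit as μ → ∞ of φ_{n−1,μ}((λ/μ)^{n−1}·s)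 equals 1/(λ + s). -/
/-!
Vieta's relations `μ q₁ q₂ = λ`, `μ (q₁ + q₂) = λ + μ + t` turn `V` into
`μ² (q₁ⁿ (1 - q₁) - q₂ⁿ (1 - q₂))` and `R` into `-λ (λ/μ)ⁿ⁻² (q₁ - q₂)`, and evaluating the
characteristic polynomial at `1` gives `μ (1 - q₁) (1 - q₂) = -t`. For `t = (λ/μ)ⁿ⁻¹ s` the common
factor `-μ (λ/μ)ⁿ⁻¹ = -μ (q₁ q₂)ⁿ⁻¹` cancels and leaves
`φ = (q₁ - q₂) / (s q₁ⁿ / (1 - q₂) + λ (1 - q₂) / q₁ⁿ)`,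
which tends to `1 / (λ + s)` because `q₁ → 1` and `q₂ → 0` as `μ → ∞`.
-/

open Filter Topology

namespace RepairableSystem

noncomputable def sqrtDisc (lam mu t : ℝ) : ℝ := Real.sqrt ((lam + mu + t) ^ 2 - 4 * lam * mu)

noncomputable def q₁ (lam mu t : ℝ) : ℝ := ((lam + mu + t) + sqrtDisc lam mu t) / (2 * mu)

noncomputable def q₂ (lam mu t : ℝ) : ℝ := ((lam + mu + t) - sqrtDisc lam mu t) / (2 * mu)

noncomputable def R (n : ℕ) (lam mu t : ℝ) : ℝ := -lam * (lam / mu) ^ (n - 2) * sqrtDisc lam mu t / mu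

noncomputable def V (n : ℕ) (lam mu t : ℝ) : ℝ :=
  q₂ lam mu t ^ (n - 2) * (lam - q₂ lam mu t * (lam + mu + t)) * (mu * q₁ lam mu t - (lam + t)) +
    q₁ lam mu t ^ (n - 2) * (mu * q₂ lam mu t - (lam + t)) * (q₁ lam mu t * (lam + mu + t) - lam)

noncomputable def phi (n : ℕ) (lam mu t : ℝ) : ℝ := R n lam mu t / V n lam mu t

section Vieta

variable {lam mu t x y : ℝ} (hsum : mu * (x + y) = lam + mu + t) (hprod : mu * (x * y) = lam)
include hsum hprod

theorem mul_one_sub_mul_one_sub_of_vieta : mu * ((1 - x) * (1 - y)) = -t := by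
  linear_combination hprod - hsum

theorem den_eq_of_vieta (k : ℕ) :
    y ^ k * (lam - y * (lam + mu + t)) * (mu * x - (lam + t)) +
        x ^ k * (mu * y - (lam + t)) * (x * (lam + mu + t) - lam) =
      mu ^ 2 * (x ^ (k + 2) * (1 - x) - y ^ (k + 2) * (1 - y)) := by
  obtain rfl : t = mu * (x + y) - lam - mu := by linarith
  subst hprod
  ring

theorem ratio_eq_of_vieta (k : ℕ) (s : ℝ) (hmu : mu ≠ 0) (hlam : lam ≠ 0) (hx : x ≠ 0)
    (hy : 1 - y ≠ 0) (ht : t = (lam / mu) ^ (k + 1) * s) :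
    -lam * (lam / mu) ^ k * (mu * (x - y)) / mu /
        (mu ^ 2 * (x ^ (k + 2) * (1 - x) - y ^ (k + 2) * (1 - y))) =
      (x - y) / (s * x ^ (k + 2) / (1 - y) + lam * (1 - y) / x ^ (k + 2)) := by
  have hxy : lam / mu = x * y := by rw [← hprod]; field_simp
  have hone := mul_one_sub_mul_one_sub_of_vieta hsum hprod
  rw [ht, hxy] at hone
  have hc : -mu * (x * y) ^ (k + 1) ≠ 0 := by
    have : x * y ≠ 0 := by rw [← hxy]; exact div_ne_zero hlam hmu
    exact mul_ne_zero (neg_ne_zero.mpr hmu) (pow_ne_zero _ this)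
  have hnum : -lam * (lam / mu) ^ k * (mu * (x - y)) / mu = -mu * (x * y) ^ (k + 1) * (x - y) := by
    rw [hxy, ← hprod]; field_simp; ring
  have hden : mu ^ 2 * (x ^ (k + 2) * (1 - x) - y ^ (k + 2) * (1 - y)) =
      -mu * (x * y) ^ (k + 1) * (s * x ^ (k + 2) / (1 - y) + lam * (1 - y) / x ^ (k + 2)) := by
    rw [← hprod]
    field_simp
    linear_combination (x ^ (k + 2)) ^ 2 * hone
  rw [hnum, hden, mul_div_mul_left _ _ hc]

end Vieta

section Roots

variable {lam mu t : ℝ}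

theorem q₁_add_q₂ : q₁ lam mu t + q₂ lam mu t = (lam + mu + t) / mu := by
  unfold q₁ q₂; ring

theorem q₁_sub_q₂ : q₁ lam mu t - q₂ lam mu t = sqrtDisc lam mu t / mu := by
  unfold q₁ q₂; ring

theorem discriminant_nonneg (hlam : 0 ≤ lam) (ht : 0 ≤ t) :
    0 ≤ (lam + mu + t) ^ 2 - 4 * lam * mu := by
  nlinarith [sq_nonneg (mu - lam + t), mul_nonneg hlam ht]

theorem q₁_mul_q₂ (h : 0 ≤ (lam + mu + t) ^ 2 - 4 * lam * mu) :
    q₁ lam mu t * q₂ lam mu t = lam / mu := by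
  unfold q₁ q₂ sqrtDisc
  rw [div_mul_div_comm, ← sq_sub_sq, Real.sq_sqrt h]
  rcases eq_or_ne mu 0 with rfl | hmu
  · simp
  · field_simp
    ring

theorem q₁_eq_of_pos (hmu : 0 < mu) :
    q₁ lam mu t = ((lam + mu + t) / mu + √(((lam + mu + t) / mu) ^ 2 - 4 * (lam / mu))) / 2 := by
  have hsqrt : √((lam + mu + t) ^ 2 - 4 * lam * mu) / mu =
      √(((lam + mu + t) / mu) ^ 2 - 4 * (lam / mu)) := by
    rw [show ((lam + mu + t) / mu) ^ 2 - 4 * (lam / mu) =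
        ((lam + mu + t) ^ 2 - 4 * lam * mu) / mu ^ 2 by field_simp,
      Real.sqrt_div' _ (sq_nonneg mu), Real.sqrt_sq hmu.le]
  unfold q₁ sqrtDisc
  rw [← hsqrt]
  field_simp

theorem phi_eq {n : ℕ} {s : ℝ} (hn : 2 ≤ n) (hlam : 0 < lam) (hmu : 0 < mu) (hs : 0 ≤ s)
    (ht : t = (lam / mu) ^ (n - 1) * s) (hx : q₁ lam mu t ≠ 0) (hy : 1 - q₂ lam mu t ≠ 0) :
    phi n lam mu t = (q₁ lam mu t - q₂ lam mu t) /
      (s * q₁ lam mu t ^ n / (1 - q₂ lam mu t) + lam * (1 - q₂ lam mu t) / q₁ lam mu t ^ n) := by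
  obtain ⟨k, rfl⟩ : ∃ k, n = k + 2 := ⟨n - 2, by omega⟩
  have hdisc : 0 ≤ (lam + mu + t) ^ 2 - 4 * lam * mu :=
    discriminant_nonneg hlam.le (by rw [ht]; positivity)
  have hsum : mu * (q₁ lam mu t + q₂ lam mu t) = lam + mu + t := by
    rw [q₁_add_q₂]; field_simp
  have hprod : mu * (q₁ lam mu t * q₂ lam mu t) = lam := by
    rw [q₁_mul_q₂ hdisc]; field_simp
  have hdiff : sqrtDisc lam mu t = mu * (q₁ lam mu t - q₂ lam mu t) := by
    rw [q₁_sub_q₂]; field_simp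
  unfold phi R V
  rw [hdiff, den_eq_of_vieta hsum hprod, Nat.add_sub_cancel]
  exact ratio_eq_of_vieta hsum hprod k s hmu.ne' hlam.ne' hx hy ht

end Roots

section Limits

variable (lam : ℝ) {t : ℝ → ℝ} (ht : Tendsto t atTop (𝓝 0))
include ht

theorem tendsto_add_add_div_self : Tendsto (fun mu => (lam + mu + t mu) / mu) atTop (𝓝 1) := by
  have h := (((tendsto_const_nhds (x := lam)).add ht).div_atTop tendsto_id).const_add 1
  rw [add_zero] at h
  refine h.congr' ?_
  filter_upwards [eventually_ne_atTop 0] with mu hmu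
  simp only [id]
  field_simp
  ring

theorem tendsto_q₁ : Tendsto (fun mu => q₁ lam mu (t mu)) atTop (𝓝 1) := by
  have hu := tendsto_add_add_div_self lam ht
  have hv : Tendsto (fun mu : ℝ => lam / mu) atTop (𝓝 0) := tendsto_const_nhds.div_atTop tendsto_id
  have h := (hu.add ((hu.pow 2).sub (hv.const_mul 4)).sqrt).div_const 2
  rw [show ((1 : ℝ) + √(1 ^ 2 - 4 * 0)) / 2 = 1 by norm_num] at h
  refine h.congr' ?_
  filter_upwards [eventually_gt_atTop 0] with mu hmu
  exact (q₁_eq_of_pos hmu).symm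

theorem tendsto_q₂ : Tendsto (fun mu => q₂ lam mu (t mu)) atTop (𝓝 0) := by
  have h := (tendsto_add_add_div_self lam ht).sub (tendsto_q₁ lam ht)
  rw [sub_self] at h
  refine h.congr fun mu => ?_
  rw [← q₁_add_q₂, add_sub_cancel_left]

end Limits

theorem tendsto_ratio {α : Type*} {l : Filter α} (n : ℕ) {lam s : ℝ} {x y : α → ℝ}
    (hx : Tendsto x l (𝓝 1)) (hy : Tendsto y l (𝓝 0)) (hls : lam + s ≠ 0) :
    Tendsto (fun a => (x a - y a) / (s * x a ^ n / (1 - y a) + lam * (1 - y a) / x a ^ n)) l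
      (𝓝 (1 / (lam + s))) := by
  have hy' : Tendsto (fun a => 1 - y a) l (𝓝 1) := by
    simpa using (tendsto_const_nhds (x := (1 : ℝ))).sub hy
  have h : Tendsto (fun a => (x a - y a) / (s * x a ^ n / (1 - y a) + lam * (1 - y a) / x a ^ n)) l
      (𝓝 ((1 - 0) / (s * 1 ^ n / 1 + lam * 1 / 1 ^ n))) :=
    (hx.sub hy).div ((((hx.pow n).const_mul s).div hy' one_ne_zero).add
      ((hy'.const_mul lam).div (hx.pow n) (by simp))) (by simpa [add_comm] using hls)
  rwa [sub_zero, one_pow, div_one, div_one, mul_one, mul_one, add_comm] at h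

end RepairableSystem

open RepairableSystem in
theorem stmt_13 (n : ℕ) (hn : 3 < n) (lam s : ℝ) (hlam : 0 < lam) (hs : 0 ≤ s) :
    Tendsto
      (fun mu : ℝ =>
        (fun t : ℝ =>
            (-lam * (lam / mu) ^ (n - 2) *
                Real.sqrt ((lam + mu + t) ^ 2 - 4 * lam * mu) / mu) /
            ((((lam + mu + t) - Real.sqrt ((lam + mu + t) ^ 2 - 4 * lam * mu)) /
                    (2 * mu)) ^ (n - 2) *
                  (lam -
                    (((lam + mu + t) - Real.sqrt ((lam + mu + t) ^ 2 - 4 * lam * mu)) /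
                        (2 * mu)) * (lam + mu + t)) *
                  (mu *
                      (((lam + mu + t) + Real.sqrt ((lam + mu + t) ^ 2 - 4 * lam * mu)) /
                        (2 * mu)) - (lam + t)) +
                (((lam + mu + t) + Real.sqrt ((lam + mu + t) ^ 2 - 4 * lam * mu)) /
                    (2 * mu)) ^ (n - 2) *
                  (mu *
                      (((lam + mu + t) - Real.sqrt ((lam + mu + t) ^ 2 - 4 * lam * mu)) /
                        (2 * mu)) - (lam + t)) *
                  ((((lam + mu + t) + Real.sqrt ((lam + mu + t) ^ 2 - 4 * lam * mu)) /
                        (2 * mu)) * (lam + mu + t) - lam)))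
          ((lam / mu) ^ (n - 1) * s))
      atTop (𝓝 (1 / (lam + s))) := by
  show Tendsto (fun mu => phi n lam mu ((lam / mu) ^ (n - 1) * s)) atTop (𝓝 (1 / (lam + s)))
  have ht : Tendsto (fun mu : ℝ => (lam / mu) ^ (n - 1) * s) atTop (𝓝 0) := by
    have h := ((tendsto_const_nhds (x := lam)).div_atTop tendsto_id).pow (n - 1) |>.mul_const s
    rwa [zero_pow (by omega), zero_mul] at h
  have hx := tendsto_q₁ lam ht
  have hy := tendsto_q₂ lam ht
  refine (tendsto_ratio n hx hy (by positivity)).congr' ?_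
  filter_upwards [eventually_gt_atTop 0, hx.eventually_ne one_ne_zero,
    hy.eventually_ne zero_ne_one] with mu hmu hx0 hy1
  exact (phi_eq (by omega) hlam hmu hs rfl hx0 (sub_ne_zero.mpr hy1.symm)).symm
end
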